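/- Let K ≥ 1 be an integer and let k be an integer with K ≤ k ≤ 2K. For every real u ≥ 0 satisfying u ≤ K/300 or u ≥ 40K, one has u^k / k! ≤ e^{u/2} / 110^k. -/

import Mathlib

open Real

/-- `n^n ≤ n! · e^n`, from the Taylor series of `exp`. -/
lemma aux_pow_le_factorial_mul_exp (n : ℕ) : (n : ℝ) ^ n ≤ (n.factorial : ℝ) * Real.exp n := by
  have h : (n : ℝ) ^ n / (n.factorial : ℝ) ≤ Real.exp n := by
    calc (n : ℝ) ^ n / (n.factorial : ℝ)
        ≤ ∑ i ∈ Finset.range (n + 1), (n : ℝ) ^ i / (i.factorial : ℝ) := by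
          refine Finset.single_le_sum (f := fun i => (n : ℝ) ^ i / (i.factorial : ℝ)) ?_ ?_
          · intro i _
            positivity
          · simp
      _ ≤ Real.exp n := Real.sum_le_exp_of_nonneg (Nat.cast_nonneg n) _
  have hfac : (0 : ℝ) < (n.factorial : ℝ) := by positivity
  rw [div_le_iff₀ hfac] at h
  linarith [h]

/-- For `t ≥ 20`, `110 e t ≤ e^{t/2}`. -/
lemma aux_t_ineq {t : ℝ} (ht : 20 ≤ t) : 110 * Real.exp 1 * t ≤ Real.exp (t / 2) := by
  have h1 : Real.exp (t / 2) = Real.exp 10 * Real.exp ((t - 20) / 2) := by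
    rw [← Real.exp_add]; ring_nf
  have h2 : 1 + (t - 20) / 2 ≤ Real.exp ((t - 20) / 2) := by
    have := Real.add_one_le_exp ((t - 20) / 2)
    linarith
  have h3 : (2.7 : ℝ) ^ 10 ≤ Real.exp 10 := by
    have h : (2.7 : ℝ) ≤ Real.exp 1 := by
      have := Real.exp_one_gt_d9
      linarith
    calc (2.7 : ℝ) ^ 10 ≤ (Real.exp 1) ^ 10 := by
          apply pow_le_pow_left₀ (by norm_num) h
      _ = Real.exp 10 := by
          rw [← Real.exp_nat_mul]; norm_num
  have h4 : Real.exp 1 ≤ 2.7182818286 := Real.exp_one_lt_d9.le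
  have key : Real.exp 10 * (1 + (t - 20) / 2) ≤ Real.exp (t / 2) := by
    rw [h1]
    exact mul_le_mul_of_nonneg_left h2 (Real.exp_pos 10).le
  have hE : (20589 : ℝ) ≤ Real.exp 10 := by
    refine le_trans ?_ h3
    norm_num
  have h6 : (110 : ℝ) * Real.exp 1 * t ≤ 299.2 * t := by
    have ht0 : (0:ℝ) ≤ t := by linarith
    nlinarith [h4, ht0]
  have h7 : (299.2 : ℝ) * t ≤ 20589 * (1 + (t - 20) / 2) := by linarith
  have h8 : (20589 : ℝ) * (1 + (t - 20) / 2) ≤ Real.exp 10 * (1 + (t - 20) / 2) := by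
    have hpos2 : (0:ℝ) ≤ 1 + (t - 20) / 2 := by linarith
    exact mul_le_mul_of_nonneg_right hE hpos2
  linarith

/-- The elementary inequality from the proof of Lemma 5.4: if `K ≥ 1`, `K ≤ k ≤ 2K`, and
`u ≥ 0` satisfies `u ≤ K/300` or `u ≥ 40K`, then `u^k/k! ≤ e^{u/2}/110^k`. -/
theorem stmt_15 (K k : ℕ) (hK : 1 ≤ K) (hk₁ : K ≤ k) (hk₂ : k ≤ 2 * K)
    (u : ℝ) (hu : 0 ≤ u) (hrange : u ≤ (K : ℝ) / 300 ∨ 40 * (K : ℝ) ≤ u) :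
    u ^ k / (k.factorial : ℝ) ≤ Real.exp (u / 2) / 110 ^ k := by
  have hk1 : 1 ≤ k := le_trans hK hk₁
  have hkpos : (0 : ℝ) < (k : ℝ) := by exact_mod_cast hk1
  have hfacpos : (0 : ℝ) < (k.factorial : ℝ) := by positivity
  have hfac : ((k : ℝ) / Real.exp 1) ^ k ≤ (k.factorial : ℝ) := by
    have h := aux_pow_le_factorial_mul_exp k
    have hek : Real.exp (k : ℝ) = (Real.exp 1) ^ k := by
      rw [← Real.exp_nat_mul]; norm_num
    rw [div_pow, div_le_iff₀ (by positivity)]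
    calc (k : ℝ) ^ k ≤ (k.factorial : ℝ) * Real.exp k := h
      _ = (k.factorial : ℝ) * (Real.exp 1) ^ k := by rw [hek]
  -- key reduction: it suffices that (110 * e * u / k)^k ≤ exp (u/2)
  have main : ∀ _ : (110 * Real.exp 1 * u / k) ^ k ≤ Real.exp (u / 2),
      u ^ k / (k.factorial : ℝ) ≤ Real.exp (u / 2) / 110 ^ k := by
    intro hkey
    rw [div_le_div_iff₀ hfacpos (by positivity)]
    have expand : (110 * Real.exp 1 * u / k) ^ k * ((k:ℝ)/Real.exp 1) ^ k
        = u ^ k * 110 ^ k := by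
      have hnum : 110 * Real.exp 1 * u / k * ((k:ℝ)/Real.exp 1) = u * 110 := by
        field_simp
      rw [← mul_pow, hnum, mul_pow]
    calc u ^ k * 110 ^ k = (110 * Real.exp 1 * u / k) ^ k * ((k:ℝ)/Real.exp 1) ^ k := expand.symm
      _ ≤ Real.exp (u/2) * (k.factorial : ℝ) := by
          apply mul_le_mul hkey hfac (by positivity) (Real.exp_pos _).le
  rcases hrange with h | h
  · -- small u : u ≤ K/300 ≤ k/300
    apply main
    have huk : 110 * Real.exp 1 * u / k ≤ 110 * Real.exp 1 / 300 := by
      have hKk : (K : ℝ) ≤ (k : ℝ) := by exact_mod_cast hk₁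
      rw [div_le_div_iff₀ hkpos (by norm_num)]
      have huk' : u ≤ (k : ℝ) / 300 := le_trans h (by linarith)
      nlinarith [Real.exp_pos 1]
    have h1 : 110 * Real.exp 1 / 300 ≤ 1 := by
      have := Real.exp_one_lt_d9
      nlinarith
    calc (110 * Real.exp 1 * u / k) ^ k ≤ 1 ^ k := by
          apply pow_le_pow_left₀ (by positivity) (le_trans huk h1)
      _ = 1 := one_pow k
      _ ≤ Real.exp (u / 2) := by
          rw [← Real.exp_zero]
          exact Real.exp_le_exp.mpr (by linarith)
  · -- large u : u ≥ 40K ≥ 20k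
    apply main
    have hku : 20 * (k : ℝ) ≤ u := by
      have h2K : (k : ℝ) ≤ 2 * (K : ℝ) := by exact_mod_cast hk₂
      linarith
    set t := u / k with ht
    have ht20 : 20 ≤ t := by
      rw [ht, le_div_iff₀ hkpos]; linarith
    have hti := aux_t_ineq ht20
    have heq : 110 * Real.exp 1 * u / k = 110 * Real.exp 1 * t := by
      rw [ht]; ring
    rw [heq]
    calc (110 * Real.exp 1 * t) ^ k ≤ (Real.exp (t / 2)) ^ k := by
          apply pow_le_pow_left₀ (by positivity) hti
      _ = Real.exp (t / 2 * k) := by rw [← Real.exp_nat_mul]; ring_nf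
      _ = Real.exp (u / 2) := by
          congr 1
          rw [ht]; field_simp
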